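/- Let Φ = (G, φ) be a connected T-gain graph. Then the largest eigenvalue of the Hermitian adjacency matrix A(Φ) equals the largest eigenvalue of the adjacency matrix A(G) of the underlying graph if and only if Φ is balanced. -/

import Mathlib

/-!
A gain is balanced exactly when it is switching equivalent to the trivial gain,
`φ i j = θ i * (θ j)⁻¹` on edges: `θ v` can be taken to be the gain of any walk from `v` to a fixed
root, which is well defined because a closed walk splits into cycles and edges traversed back and
forth. Switching is conjugation by the diagonal matrix `diag θ`, so it preserves the spectrum.
Conversely, if `x` is an eigenvector of `A(Φ)` for `λ₁(Φ) = λ₁(G)`, then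
`λ₁(Φ) ‖x‖² = x* A(Φ) x ≤ |x|ᵀ A(G) |x| ≤ λ₁(G) ‖x‖²` is an equality throughout: so `|x|` is a
Perron vector of the connected graph `G`, hence nowhere zero, and termwise equality forces
`φ i j = (x i / |x i|) * (x j / |x j|)⁻¹` on every edge.
-/

open Matrix
open scoped Classical

noncomputable section

namespace GG

variable {V : Type*}

/-- The gain of a walk: product of the gains of its oriented edges. -/
def walkGain {G : SimpleGraph V} (φ : V → V → ℂ) {u v : V} (p : G.Walk u v) : ℂ :=
  (p.darts.map (fun d => φ d.toProd.1 d.toProd.2)).prod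

/-- `φ` is a `𝕋`-gain function on `G`: unit modulus on edges, inverse under reversal. -/
def IsGain (G : SimpleGraph V) (φ : V → V → ℂ) : Prop :=
  (∀ i j, G.Adj i j → ‖φ i j‖ = 1) ∧ (∀ i j, G.Adj i j → φ j i = (φ i j)⁻¹)

/-- Adjacency matrix of a gain graph. -/
def gainAdj [Fintype V] [DecidableEq V] (G : SimpleGraph V) (φ : V → V → ℂ) :
    Matrix V V ℂ := fun i j => if G.Adj i j then φ i j else 0

/-- A gain graph is balanced if every cycle has gain 1. -/
def GBalanced (G : SimpleGraph V) (φ : V → V → ℂ) : Prop :=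
  ∀ (u : V) (c : G.Walk u u), c.IsCycle → walkGain φ c = 1

/-- All shortest paths between any pair of vertices have the same gain. -/
def DistCompatible (G : SimpleGraph V) (φ : V → V → ℂ) : Prop :=
  ∀ (s t : V) (p q : G.Walk s t), p.length = G.dist s t → q.length = G.dist s t →
    walkGain φ p = walkGain φ q

/-- The set of gains of shortest `s`-`t` paths. -/
def shortestGains (G : SimpleGraph V) (φ : V → V → ℂ) (s t : V) : Set ℂ :=
  {z | ∃ p : G.Walk s t, p.length = G.dist s t ∧ walkGain φ p = z}

/-- The element of `S` maximizing the real part, ties broken by maximal imaginary part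
(correct for finite nonempty sets of gains). -/
def lexMaxGain (S : Set ℂ) : ℂ :=
  ⟨sSup (Complex.re '' S), sSup (Complex.im '' {z ∈ S | z.re = sSup (Complex.re '' S)})⟩

/-- The element of `S` minimizing the real part, ties broken by minimal imaginary part. -/
def lexMinGain (S : Set ℂ) : ℂ :=
  ⟨sInf (Complex.re '' S), sInf (Complex.im '' {z ∈ S | z.re = sInf (Complex.re '' S)})⟩

/-- The maximum gain distance matrix `D^max_<(Φ)` with respect to a strict order `lt`. -/
def Dmax [Fintype V] [DecidableEq V] (G : SimpleGraph V) (φ : V → V → ℂ)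
    (lt : V → V → Prop) : Matrix V V ℂ := fun s t =>
  if lt s t then lexMaxGain (shortestGains G φ s t) * (G.dist s t : ℂ)
  else if lt t s then (starRingEnd ℂ) (lexMaxGain (shortestGains G φ t s)) * (G.dist s t : ℂ)
  else 0

/-- The minimum gain distance matrix `D^min_<(Φ)` with respect to a strict order `lt`. -/
def Dmin [Fintype V] [DecidableEq V] (G : SimpleGraph V) (φ : V → V → ℂ)
    (lt : V → V → Prop) : Matrix V V ℂ := fun s t =>
  if lt s t then lexMinGain (shortestGains G φ s t) * (G.dist s t : ℂ)
  else if lt t s then (starRingEnd ℂ) (lexMinGain (shortestGains G φ t s)) * (G.dist s t : ℂ)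
  else 0

/-- Vertex order independence: the gain distance matrices agree for the standard order
and its reverse. -/
def OrderIndependent [Fintype V] [DecidableEq V] [LinearOrder V] (G : SimpleGraph V)
    (φ : V → V → ℂ) : Prop :=
  Dmax G φ (· < ·) = Dmax G φ (fun a b => b < a) ∧
  Dmin G φ (· < ·) = Dmin G φ (fun a b => b < a)

/-- The largest (real) eigenvalue of a matrix. -/
def maxEig [Fintype V] [DecidableEq V] (A : Matrix V V ℂ) : ℝ :=
  sSup {r : ℝ | (r : ℂ) ∈ spectrum ℂ A}

/-- The spectral radius of a matrix. -/
def specRad [Fintype V] [DecidableEq V] (A : Matrix V V ℂ) : ℝ :=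
  sSup {r : ℝ | ∃ z ∈ spectrum ℂ A, ‖z‖ = r}

/-- The distance matrix of the underlying graph, as a complex matrix. -/
def distMatrix [Fintype V] [DecidableEq V] (G : SimpleGraph V) : Matrix V V ℂ :=
  fun i j => (G.dist i j : ℂ)

/-- Weighted gain adjacency matrix `A(Φ_w)`. -/
def wGainAdj [Fintype V] [DecidableEq V] (G : SimpleGraph V) (φ : V → V → ℂ)
    (w : V → V → ℝ) : Matrix V V ℂ := fun i j => if G.Adj i j then φ i j * (w i j : ℂ) else 0

/-- Weighted adjacency matrix `A(G_w)` of the underlying weighted graph. -/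
def wAdj [Fintype V] [DecidableEq V] (G : SimpleGraph V) (w : V → V → ℝ) :
    Matrix V V ℂ := fun i j => if G.Adj i j then (w i j : ℂ) else 0

namespace IsGain

variable {G : SimpleGraph V} {φ : V → V → ℂ}

lemma ne_zero (hφ : IsGain G φ) {u v : V} (h : G.Adj u v) : φ u v ≠ 0 :=
  norm_ne_zero_iff.mp (by rw [hφ.1 u v h]; exact one_ne_zero)

lemma mul_swap_eq_one (hφ : IsGain G φ) {u v : V} (h : G.Adj u v) : φ u v * φ v u = 1 := by
  rw [hφ.2 u v h, mul_inv_cancel₀ (hφ.ne_zero h)]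

end IsGain

section Walks

open SimpleGraph Walk

variable {G : SimpleGraph V} {φ : V → V → ℂ}

@[simp] lemma walkGain_nil {u : V} : walkGain φ (nil : G.Walk u u) = 1 := rfl

@[simp] lemma walkGain_cons {u v w : V} (h : G.Adj u v) (p : G.Walk v w) :
    walkGain φ (cons h p) = φ u v * walkGain φ p := by
  simp [walkGain]

@[simp] lemma walkGain_append {u v w : V} (p : G.Walk u v) (q : G.Walk v w) :
    walkGain φ (p.append q) = walkGain φ p * walkGain φ q := by
  simp [walkGain, darts_append]

lemma GBalanced.walkGain_eq_one (hb : GBalanced G φ) (hφ : IsGain G φ) {u : V}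
    (c : G.Walk u u) : walkGain φ c = 1 := by
  induction hn : c.length using Nat.strong_induction_on generalizing u c with
  | _ n ih =>
    cases c with
    | nil => rfl
    | @cons _ v _ h p =>
      by_cases hp : p.IsPath
      · by_cases he : s(u, v) ∈ p.edges
        · rw [hp.eq_adj_toWalk_of_mem_edges (Sym2.eq_swap ▸ he)]
          simpa using hφ.mul_swap_eq_one h
        · exact hb u _ ((cons_isCycle_iff p h).2 ⟨hp, he⟩)
      · obtain ⟨w, d, ⟨r₁, r₂, rfl⟩, hd⟩ :
            ∃ (w : V) (d : G.Walk w w), d.IsSubwalk p ∧ ¬d.Nil := by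
          simpa [isPath_iff_isSubwalk_imp_nil] using hp
        have hd' : 0 < d.length := not_nil_iff_lt_length.mp hd
        simp only [length_cons, length_append] at hn
        have hrest := ih _ (by simp only [length_cons, length_append]; omega)
          (cons h (r₁.append r₂)) rfl
        have hloop := ih _ (by omega) d rfl
        simp only [walkGain_cons, walkGain_append] at hrest ⊢
        linear_combination (walkGain φ r₁ * walkGain φ r₂ * φ u v) * hloop + hrest

end Walks

/-- `θ` switches the trivial gain on `G` to `φ`: `(G, φ)` is switching equivalent to `G`. -/
def IsSwitchingFunction (G : SimpleGraph V) (φ : V → V → ℂ) (θ : V → ℂˣ) : Prop :=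
  ∀ i j, G.Adj i j → φ i j = θ i * ↑(θ j)⁻¹

section Switching

open SimpleGraph

variable {G : SimpleGraph V} {φ : V → V → ℂ}

lemma IsSwitchingFunction.walkGain_eq {θ : V → ℂˣ} (hθ : IsSwitchingFunction G φ θ) {u v : V}
    (p : G.Walk u v) : walkGain φ p = θ u * ↑(θ v)⁻¹ := by
  induction p with
  | nil => simp
  | cons h p ih => simp [hθ _ _ h, ih, mul_assoc]

lemma IsSwitchingFunction.gBalanced {θ : V → ℂˣ} (hθ : IsSwitchingFunction G φ θ) :
    GBalanced G φ := fun u c _ => by simp [hθ.walkGain_eq c]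

lemma GBalanced.walkGain_eq_walkGain (hb : GBalanced G φ) (hφ : IsGain G φ) {u v : V}
    (p q : G.Walk u v) : walkGain φ p = walkGain φ q := by
  have hpq := hb.walkGain_eq_one hφ (p.append q.reverse)
  have hqq := hb.walkGain_eq_one hφ (q.append q.reverse)
  rw [walkGain_append] at hpq hqq
  linear_combination (walkGain φ q) * hpq - (walkGain φ p) * hqq

lemma GBalanced.exists_isSwitchingFunction (hb : GBalanced G φ) (hconn : G.Connected)
    (hφ : IsGain G φ) : ∃ θ : V → ℂˣ, IsSwitchingFunction G φ θ := by
  obtain ⟨r⟩ := hconn.nonempty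
  have hwalk (v : V) : G.Walk v r := (hconn.preconnected v r).some
  have hunit (v : V) : walkGain φ (hwalk v) ≠ 0 := by
    have := hb.walkGain_eq_one hφ ((hwalk v).append (hwalk v).reverse)
    rw [walkGain_append] at this
    exact left_ne_zero_of_mul_eq_one this
  refine ⟨fun v => Units.mk0 _ (hunit v), fun i j h => ?_⟩
  have hij := hb.walkGain_eq_walkGain hφ (hwalk i) (Walk.cons h (hwalk j))
  rw [walkGain_cons] at hij
  simp [hij, mul_inv_cancel_right₀ (hunit j)]

end Switching

section Spectral

open scoped ComplexOrder

variable {n : Type*} [Fintype n] [DecidableEq n] {A : Matrix n n ℂ}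

lemma _root_.Matrix.IsHermitian.setOf_ofReal_mem_spectrum (hA : A.IsHermitian) :
    {r : ℝ | (r : ℂ) ∈ spectrum ℂ A} = Set.range hA.eigenvalues := by
  simp [hA.spectrum_eq_image_range, Set.ext_iff]

lemma _root_.Matrix.IsHermitian.eigenvalues_le_maxEig (hA : A.IsHermitian) (i : n) :
    hA.eigenvalues i ≤ maxEig A := by
  rw [maxEig, hA.setOf_ofReal_mem_spectrum]
  exact le_csSup (Set.finite_range _).bddAbove ⟨i, rfl⟩

lemma _root_.Matrix.IsHermitian.exists_eigenvalues_eq_maxEig [Nonempty n] (hA : A.IsHermitian) :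
    ∃ i, hA.eigenvalues i = maxEig A := by
  rw [maxEig, hA.setOf_ofReal_mem_spectrum]
  exact Set.Nonempty.csSup_mem (Set.range_nonempty _) (Set.finite_range _)

lemma _root_.Matrix.IsHermitian.exists_mulVec_eq_maxEig_smul [Nonempty n] (hA : A.IsHermitian) :
    ∃ x ≠ 0, A *ᵥ x = (maxEig A : ℂ) • x := by
  obtain ⟨i, hi⟩ := hA.exists_eigenvalues_eq_maxEig
  refine ⟨⇑(hA.eigenvectorBasis i), fun h => ?_, ?_⟩
  · exact hA.eigenvectorBasis.orthonormal.ne_zero i (by ext j; exact congrFun h j)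
  · rw [hA.mulVec_eigenvectorBasis, hi, Complex.coe_smul]

lemma _root_.Matrix.IsHermitian.posSemidef_maxEig_smul_one_sub (hA : A.IsHermitian) :
    ((maxEig A : ℂ) • 1 - A).PosSemidef := by
  refine posSemidef_iff_isHermitian_and_spectrum_nonneg.mpr ⟨?_, ?_⟩
  · exact (isHermitian_one.smul (Complex.conj_ofReal _)).sub hA
  · rw [← Algebra.algebraMap_eq_smul_one, ← spectrum.singleton_sub_eq,
      hA.spectrum_eq_image_range]
    rintro _ ⟨_, rfl, _, ⟨_, ⟨i, rfl⟩, rfl⟩, rfl⟩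
    simpa [Complex.zero_le_real] using hA.eigenvalues_le_maxEig i

lemma _root_.Matrix.IsHermitian.re_dotProduct_mulVec_le (hA : A.IsHermitian) (x : n → ℂ) :
    (star x ⬝ᵥ A *ᵥ x).re ≤ maxEig A * (star x ⬝ᵥ x).re := by
  have := (Complex.le_def.mp (hA.posSemidef_maxEig_smul_one_sub.dotProduct_mulVec_nonneg x)).1
  simpa [sub_mulVec, dotProduct_sub, smul_mulVec, dotProduct_smul] using this

lemma _root_.Matrix.IsHermitian.mulVec_eq_maxEig_smul_of_le (hA : A.IsHermitian) {x : n → ℂ}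
    (hx : maxEig A * (star x ⬝ᵥ x).re ≤ (star x ⬝ᵥ A *ᵥ x).re) :
    A *ᵥ x = (maxEig A : ℂ) • x := by
  have hB := hA.posSemidef_maxEig_smul_one_sub
  have hnonneg := hB.dotProduct_mulVec_nonneg x
  have hre : (star x ⬝ᵥ ((maxEig A : ℂ) • 1 - A) *ᵥ x).re ≤ 0 := by
    simpa [sub_mulVec, dotProduct_sub, smul_mulVec, dotProduct_smul] using hx
  have hzero := (hB.dotProduct_mulVec_zero_iff x).mp
    (le_antisymm (Complex.le_def.mpr ⟨hre, (Complex.le_def.mp hnonneg).2.symm⟩) hnonneg)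
  rw [sub_mulVec, smul_mulVec, one_mulVec, sub_eq_zero] at hzero
  exact hzero.symm

end Spectral

section GainAdj

open SimpleGraph

variable [Fintype V] [DecidableEq V] {G : SimpleGraph V} {φ : V → V → ℂ}

lemma IsGain.isHermitian_gainAdj (hφ : IsGain G φ) : (gainAdj G φ).IsHermitian := by
  ext i j
  by_cases h : G.Adj i j
  · simp [gainAdj, h, h.symm, hφ.2 i j h, Complex.inv_eq_conj (hφ.1 i j h)]
  · have h' : ¬G.Adj j i := fun h' => h h'.symm
    simp [gainAdj, h, h']

lemma IsSwitchingFunction.gainAdj_eq {θ : V → ℂˣ} (hθ : IsSwitchingFunction G φ θ) :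
    gainAdj G φ = diagonal (fun v => (θ v : ℂ)) * G.adjMatrix ℂ
      * diagonal (fun v => ((θ v)⁻¹ : ℂˣ).val) := by
  ext i j
  rw [mul_diagonal, diagonal_mul]
  by_cases h : G.Adj i j <;> simp [gainAdj, h, hθ i j]

lemma IsSwitchingFunction.maxEig_gainAdj {θ : V → ℂˣ} (hθ : IsSwitchingFunction G φ θ) :
    maxEig (gainAdj G φ) = maxEig (G.adjMatrix ℂ) := by
  let D : (Matrix V V ℂ)ˣ := Units.map (diagonalRingHom V ℂ).toMonoidHom (MulEquiv.piUnits.symm θ)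
  have hD : gainAdj G φ = D * G.adjMatrix ℂ * (D⁻¹).val := by
    rw [hθ.gainAdj_eq]
    rfl
  simp only [maxEig, hD, spectrum.units_conjugate]

end GainAdj

lemma re_star_dotProduct_mulVec {n : Type*} [Fintype n] (M : Matrix n n ℂ) (x : n → ℂ) :
    (star x ⬝ᵥ M *ᵥ x).re = ∑ i, ∑ j, (star (x i) * M i j * x j).re := by
  simp [dotProduct, mulVec, Finset.mul_sum, mul_assoc]

lemma eq_of_re_star_mul_mul_eq_norm_mul_norm {a b g : ℂ} (hg : ‖g‖ = 1) (ha : a ≠ 0) (hb : b ≠ 0)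
    (h : (star a * g * b).re = ‖a‖ * ‖b‖) : g = (a / ‖a‖) * (b / ‖b‖)⁻¹ := by
  have hnorm : ‖star a * g * b‖ = ‖a‖ * ‖b‖ := by simp [hg]
  have hz : star a * g * b = ((‖a‖ * ‖b‖ : ℝ) : ℂ) := by
    rw [← h]
    exact Complex.eq_re_of_ofReal_le (r := 0)
      (by simpa using Complex.re_eq_norm.mp (h.trans hnorm.symm))
  have hconj : star a * a = ((‖a‖ ^ 2 : ℝ) : ℂ) := by
    rw [Complex.star_def, Complex.conj_mul']; push_cast; rfl
  have ha' : (‖a‖ : ℂ) ≠ 0 := by simpa using ha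
  have hb' : (‖b‖ : ℂ) ≠ 0 := by simpa using hb
  field_simp
  push_cast at hz hconj
  apply mul_left_cancel₀ ha'
  linear_combination a * hz - g * b * hconj

open SimpleGraph in
lemma _root_.SimpleGraph.Connected.ne_zero_of_adjMatrix_mulVec_norm_eq_smul [Fintype V]
    {G : SimpleGraph V} (hconn : G.Connected) {x : V → ℂ} (hx : x ≠ 0) {μ : ℂ}
    (h : G.adjMatrix ℂ *ᵥ (fun i => (‖x i‖ : ℂ)) = μ • fun i => (‖x i‖ : ℂ)) (v : V) :
    x v ≠ 0 := by
  have hadj : ∀ u w, G.Adj u w → x u = 0 → x w = 0 := by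
    intro u w huw hu
    have hsum : ∑ k ∈ G.neighborFinset u, ‖x k‖ = 0 := by
      have := congrFun h u
      simp only [adjMatrix_mulVec_apply, Pi.smul_apply, hu, norm_zero, Complex.ofReal_zero,
        smul_zero] at this
      exact_mod_cast this
    exact norm_eq_zero.mp ((Finset.sum_eq_zero_iff_of_nonneg fun _ _ => norm_nonneg _).mp hsum w
      ((mem_neighborFinset G u w).mpr huw))
  obtain ⟨u, hu⟩ := Function.ne_iff.mp hx
  intro hv
  have hwalk : ∀ {a b : V}, G.Walk a b → x a = 0 → x b = 0 := by
    intro a b p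
    induction p with
    | nil => exact id
    | cons h _ ih => exact fun ha => ih (hadj _ _ h ha)
  exact hu (hwalk (hconn.preconnected v u).some hv)

section Rigidity

open SimpleGraph

variable [Fintype V] [DecidableEq V] {G : SimpleGraph V} {φ : V → V → ℂ}

lemma IsGain.re_star_mul_gainAdj_mul_le (hφ : IsGain G φ) (x : V → ℂ) (i j : V) :
    (star (x i) * gainAdj G φ i j * x j).re
      ≤ (star (‖x i‖ : ℂ) * G.adjMatrix ℂ i j * (‖x j‖ : ℂ)).re := by
  by_cases h : G.Adj i j
  · calc (star (x i) * gainAdj G φ i j * x j).re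
        ≤ ‖star (x i) * gainAdj G φ i j * x j‖ := Complex.re_le_norm _
      _ = _ := by simp [gainAdj, h, hφ.1 i j h]
  · simp [gainAdj, h]

lemma exists_isSwitchingFunction_of_maxEig_eq (hconn : G.Connected) (hφ : IsGain G φ)
    (heq : maxEig (gainAdj G φ) = maxEig (G.adjMatrix ℂ)) :
    ∃ θ : V → ℂˣ, IsSwitchingFunction G φ θ := by
  have : Nonempty V := hconn.nonempty
  obtain ⟨x, hx0, hx⟩ := hφ.isHermitian_gainAdj.exists_mulVec_eq_maxEig_smul
  set y : V → ℂ := fun i => (‖x i‖ : ℂ)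
  have hnorm : (star y ⬝ᵥ y).re = (star x ⬝ᵥ x).re := by
    simp [y, dotProduct, Complex.conj_mul', sq]
  have hle := hφ.re_star_mul_gainAdj_mul_le x
  have hrow (i : V) : ∑ j, (star (x i) * gainAdj G φ i j * x j).re
      ≤ ∑ j, (star (y i) * G.adjMatrix ℂ i j * y j).re :=
    Finset.sum_le_sum fun j _ => hle i j
  have hΦ : (star x ⬝ᵥ gainAdj G φ *ᵥ x).re = maxEig (G.adjMatrix ℂ) * (star x ⬝ᵥ x).re := by
    rw [hx, dotProduct_smul, heq, smul_eq_mul, Complex.re_ofReal_mul]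
  have hG := (isHermitian_adjMatrix (R := ℂ) G).re_dotProduct_mulVec_le y
  rw [hnorm] at hG
  have hcomp : (star x ⬝ᵥ gainAdj G φ *ᵥ x).re ≤ (star y ⬝ᵥ G.adjMatrix ℂ *ᵥ y).re := by
    rw [re_star_dotProduct_mulVec, re_star_dotProduct_mulVec]
    exact Finset.sum_le_sum fun i _ => hrow i
  have hy := (isHermitian_adjMatrix (R := ℂ) G).mulVec_eq_maxEig_smul_of_le (x := y)
    (by rw [hnorm]; linarith)
  have hx_ne := hconn.ne_zero_of_adjMatrix_mulVec_norm_eq_smul hx0 hy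
  have hterm (i j : V) : (star (x i) * gainAdj G φ i j * x j).re
      = (star (y i) * G.adjMatrix ℂ i j * y j).re := by
    have htot : ∑ i, ∑ j, (star (x i) * gainAdj G φ i j * x j).re
        = ∑ i, ∑ j, (star (y i) * G.adjMatrix ℂ i j * y j).re := by
      rw [← re_star_dotProduct_mulVec, ← re_star_dotProduct_mulVec]
      linarith
    have hi := (Finset.sum_eq_sum_iff_of_le fun i _ => hrow i).mp htot i (Finset.mem_univ i)
    exact (Finset.sum_eq_sum_iff_of_le fun j _ => hle i j).mp hi j (Finset.mem_univ j)
  refine ⟨fun v => Units.mk0 (x v / ‖x v‖) (by simpa using hx_ne v), fun i j h => ?_⟩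
  simp only [Units.val_inv_eq_inv_val, Units.val_mk0]
  refine eq_of_re_star_mul_mul_eq_norm_mul_norm (hφ.1 i j h) (hx_ne i) (hx_ne j) ?_
  simpa [gainAdj, h, y] using hterm i j

end Rigidity

/-- for a connected gain graph, the largest eigenvalues of `A(Φ)` and `A(G)`
coincide iff `Φ` is balanced. -/
theorem maxEig_iff_balanced {V : Type*} [Fintype V] [DecidableEq V]
    (G : SimpleGraph V) (hconn : G.Connected) (φ : V → V → ℂ) (hφ : IsGain G φ) :
    maxEig (gainAdj G φ) = maxEig (G.adjMatrix ℂ) ↔ GBalanced G φ := by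
  constructor
  · intro heq
    obtain ⟨θ, hθ⟩ := exists_isSwitchingFunction_of_maxEig_eq hconn hφ heq
    exact hθ.gBalanced
  · intro hb
    obtain ⟨θ, hθ⟩ := hb.exists_isSwitchingFunction hconn hφ
    exact hθ.maxEig_gainAdj

end GG
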